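/- Let c, s, L, E, I, A, A*, G > 0 be reals, let a be a real with 1 < a < 16, let u, v > 1 be reals with u = v and E·A·u = G·A*·v, and let x₀ ∈ [0,1). Then the axial and shear contributions to H(P,x₀) cancel identically, and as P → ∞ the horizontal displacements H(P,x₀) converge to (20·c·s·L³/(3·E·I))·( 1/(16 − a) − (2/a)·C_{a/16}(x₀) ), where C_{a/16}(x₀) = Σ_{k=1}^∞ ρ_k(x₀) (a/16)^k. -/

import Mathlib

open Filter

/-- The `k`-th binary digit of `x ∈ [0,1)`: ρ_k(x) = ⌊2^k x⌋ − 2⌊2^{k−1} x⌋. -/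
noncomputable def binDigit (k : ℕ) (x : ℝ) : ℤ := ⌊(2:ℝ) ^ k * x⌋ - 2 * ⌊(2:ℝ) ^ (k - 1) * x⌋

/-- The series C_t(x) = Σ_{k=1}^∞ ρ_k(x) t^k: the (rescaled) inverse β-Cantor function. -/
noncomputable def Cinf (t x : ℝ) : ℝ := ∑' k : ℕ, (binDigit (k + 1) x : ℝ) * t ^ (k + 1)

/-- Horizontal displacement per unit load of the end node located at `x₀` in a binary tree
structure with `P` levels, from the Principle of Virtual Work (bending + axial + shear). -/
noncomputable def Hdisp (c s L E I A A' G a u v x₀ : ℝ) (P : ℕ) : ℝ :=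
  (∑ i ∈ Finset.Icc 1 P, (a ^ (i - 1) / (E * I)) *
      ∫ x in (0:ℝ)..(L * 2 ^ ((1:ℤ) - (i:ℤ))),
        (s * L * (2 ^ ((2:ℤ) - (i:ℤ)) - 2 ^ ((1:ℤ) - (P:ℤ))) - s * x) *
          (1 - 2 * (binDigit i x₀ : ℝ)) *
          (c * 2 ^ (-(i:ℤ)) * (L * 2 ^ ((1:ℤ) - (i:ℤ)) - x))) +
  (∑ i ∈ Finset.Icc 1 P,
      c * s * (2 * (binDigit i x₀ : ℝ) - 1) * 2 ^ (-(i:ℤ)) * L * 2 ^ ((1:ℤ) - (i:ℤ)) *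
        u ^ (i - 1) / (E * A)) +
  (∑ i ∈ Finset.Icc 1 P,
      c * s * (1 - 2 * (binDigit i x₀ : ℝ)) * 2 ^ (-(i:ℤ)) * L * 2 ^ ((1:ℤ) - (i:ℤ)) *
        v ^ (i - 1) / (G * A'))

open Topology

/-!
With `E·A = G·A*` the axial and shear terms cancel level by level. The bending integral of
level `i` is a cubic in `2^{-i}` and equals
`(c s L³ / (a E I)) (1 - 2ρ_i) (20/3 (a/16)^i - 4·2^{-P} (a/8)^i)`.
Summed over `i ≤ P`, the first part converges to `(a/16)/(1 - a/16) - 2 C_{a/16}(x₀)`, while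
`|2^{-P} Σ_{i ≤ P} (1 - 2ρ_i) (a/8)^i| ≤ P (max 1 (a/8) / 2)^P` tends to `0` because `a < 16`.
-/

lemma binDigit_eq_zero_or_one {k : ℕ} (hk : 1 ≤ k) (x : ℝ) :
    binDigit k x = 0 ∨ binDigit k x = 1 := by
  unfold binDigit
  set y := (2:ℝ) ^ (k - 1) * x
  have hky : (2:ℝ) ^ k * x = 2 * y := by
    rw [← mul_assoc, ← pow_succ', Nat.sub_add_cancel hk]
  have hlow : 2 * ⌊y⌋ ≤ ⌊2 * y⌋ :=
    Int.le_floor.mpr (by push_cast; linarith [Int.floor_le y])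
  have hhigh : ⌊2 * y⌋ < 2 * ⌊y⌋ + 2 :=
    Int.floor_lt.mpr (by push_cast; linarith [Int.lt_floor_add_one y])
  rw [hky]
  omega

lemma abs_one_sub_two_mul_binDigit {k : ℕ} (hk : 1 ≤ k) (x : ℝ) :
    |1 - 2 * (binDigit k x : ℝ)| = 1 := by
  rcases binDigit_eq_zero_or_one hk x with h | h <;> norm_num [h]

lemma hasSum_Cinf {t : ℝ} (ht : |t| < 1) (x : ℝ) :
    HasSum (fun k : ℕ => (binDigit (k + 1) x : ℝ) * t ^ (k + 1)) (Cinf t x) := by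
  refine (Summable.of_norm_bounded
    ((summable_geometric_of_lt_one (abs_nonneg t) ht).mul_left |t|) fun k => ?_).hasSum
  rw [norm_mul, norm_pow, Real.norm_eq_abs, Real.norm_eq_abs, pow_succ']
  rcases binDigit_eq_zero_or_one (Nat.le_add_left 1 k) x with h | h
  · simp only [h, Int.cast_zero, abs_zero, zero_mul]
    positivity
  · simp [h]

lemma sum_Icc_one_eq_sum_range {M : Type*} [AddCommMonoid M] (f : ℕ → M) (P : ℕ) :
    ∑ i ∈ Finset.Icc 1 P, f i = ∑ k ∈ Finset.range P, f (k + 1) := by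
  rw [← Finset.Ico_add_one_right_eq_Icc, Finset.sum_Ico_eq_sum_range, Nat.add_sub_cancel]
  simp only [add_comm 1]

lemma tendsto_sum_one_sub_two_mul_binDigit_mul_pow {t : ℝ} (ht : |t| < 1) (x : ℝ) :
    Tendsto (fun P : ℕ => ∑ i ∈ Finset.Icc 1 P, (1 - 2 * (binDigit i x : ℝ)) * t ^ i) atTop
      (𝓝 (t * (1 - t)⁻¹ - 2 * Cinf t x)) := by
  have hsum := ((hasSum_geometric_of_abs_lt_one ht).mul_left t).sub
    ((hasSum_Cinf ht x).mul_left 2)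
  convert hsum.tendsto_sum_nat using 2 with P
  rw [sum_Icc_one_eq_sum_range]
  exact Finset.sum_congr rfl fun k _ => by ring

lemma tendsto_half_pow_mul_sum_pow {w : ℕ → ℝ} (hw : ∀ i, 1 ≤ i → |w i| ≤ 1) {b : ℝ}
    (hb : |b| < 2) :
    Tendsto (fun P : ℕ => (1 / 2 : ℝ) ^ P * ∑ i ∈ Finset.Icc 1 P, w i * b ^ i) atTop (𝓝 0) := by
  set r := max 1 |b|
  have hr : |r / 2| < 1 := by
    rw [abs_of_pos (by positivity), div_lt_one two_pos]
    exact max_lt one_lt_two hb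
  refine squeeze_zero_norm (fun P => ?_) (tendsto_self_mul_const_pow_of_abs_lt_one hr)
  have hterm : ∀ i ∈ Finset.Icc 1 P, ‖w i * b ^ i‖ ≤ r ^ P := fun i hi => by
    rw [Finset.mem_Icc] at hi
    rw [norm_mul, norm_pow, Real.norm_eq_abs]
    calc |w i| * |b| ^ i ≤ 1 * r ^ i := by
          gcongr
          exacts [hw i hi.1, le_max_right 1 |b|]
      _ ≤ r ^ P := by rw [one_mul]; exact pow_le_pow_right₀ (le_max_left 1 |b|) hi.2
  calc ‖(1 / 2 : ℝ) ^ P * ∑ i ∈ Finset.Icc 1 P, w i * b ^ i‖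
      ≤ (1 / 2) ^ P * (P * r ^ P) := by
        rw [norm_mul, norm_pow, Real.norm_of_nonneg (by norm_num : (0:ℝ) ≤ 1 / 2)]
        gcongr
        simpa using norm_sum_le_of_le _ hterm
    _ = P * (r / 2) ^ P := by rw [div_eq_mul_one_div r, mul_pow]; ring

lemma integral_sub_mul_mul_sub (K s ℓ : ℝ) :
    ∫ x in (0:ℝ)..ℓ, (K - s * x) * (ℓ - x) = K * ℓ ^ 2 / 2 - s * ℓ ^ 3 / 6 := by
  have hpoly : ∀ x : ℝ, (K - s * x) * (ℓ - x) = K * ℓ - x * (K + s * ℓ) + s * x ^ 2 :=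
    fun x => by ring
  simp only [hpoly]
  rw [intervalIntegral.integral_add, intervalIntegral.integral_sub]
  · simp only [intervalIntegral.integral_const, intervalIntegral.integral_const_mul,
      intervalIntegral.integral_mul_const, integral_id, integral_pow, smul_eq_mul]
    ring
  all_goals exact Continuous.intervalIntegrable (by fun_prop) _ _

lemma bending_term_eq {a : ℝ} (ha : a ≠ 0) (c s L E I d : ℝ) {i : ℕ} (hi : 1 ≤ i) (P : ℕ) :
    (a ^ (i - 1) / (E * I)) *
        ∫ x in (0:ℝ)..(L * 2 ^ ((1:ℤ) - (i:ℤ))),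
          (s * L * (2 ^ ((2:ℤ) - (i:ℤ)) - 2 ^ ((1:ℤ) - (P:ℤ))) - s * x) * d *
            (c * 2 ^ (-(i:ℤ)) * (L * 2 ^ ((1:ℤ) - (i:ℤ)) - x)) =
      c * s * L ^ 3 / (a * E * I) * d *
        (20 / 3 * (a / 16) ^ i - 4 * (1 / 2) ^ P * (a / 8) ^ i) := by
  have hint : ∀ K m ℓ : ℝ, ∫ x in (0:ℝ)..ℓ, (K - s * x) * d * (m * (ℓ - x)) =
      d * m * (K * ℓ ^ 2 / 2 - s * ℓ ^ 3 / 6) := fun K m ℓ => by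
    simp only [show ∀ x, (K - s * x) * d * (m * (ℓ - x)) = d * m * ((K - s * x) * (ℓ - x))
      from fun x => by ring]
    rw [intervalIntegral.integral_const_mul, integral_sub_mul_mul_sub]
  have two_zpow (m : ℤ) (n : ℕ) : (2:ℝ) ^ (m - n) = 2 ^ m * (1 / 2) ^ n := by
    rw [zpow_sub₀ two_ne_zero, zpow_natCast, div_eq_mul_inv, one_div, inv_pow]
  have hneg : (2:ℝ) ^ (-(i:ℤ)) = (1 / 2) ^ i := by
    rw [zpow_neg, zpow_natCast, one_div, inv_pow]
  have h16 : (a / 16) ^ i = a ^ i * ((1 / 2) ^ i) ^ 4 := by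
    rw [show a / 16 = a * (1 / 2) ^ 4 by ring, mul_pow, ← pow_mul, ← pow_mul, mul_comm 4]
  have h8 : (a / 8) ^ i = a ^ i * ((1 / 2) ^ i) ^ 3 := by
    rw [show a / 8 = a * (1 / 2) ^ 3 by ring, mul_pow, ← pow_mul, ← pow_mul, mul_comm 3]
  have hpred : a ^ (i - 1) = a ^ i / a := by
    rw [eq_div_iff ha, ← pow_succ, Nat.sub_add_cancel hi]
  rw [hint, two_zpow, two_zpow, two_zpow, hneg, h16, h8, hpred]
  field_simp
  ring

lemma axial_add_shear_eq_zero (c s L E A A' G u x₀ : ℝ) (hGA : E * A = G * A') (P : ℕ) :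
    (∑ i ∈ Finset.Icc 1 P,
        c * s * (2 * (binDigit i x₀ : ℝ) - 1) * 2 ^ (-(i:ℤ)) * L * 2 ^ ((1:ℤ) - (i:ℤ)) *
          u ^ (i - 1) / (E * A)) +
      (∑ i ∈ Finset.Icc 1 P,
        c * s * (1 - 2 * (binDigit i x₀ : ℝ)) * 2 ^ (-(i:ℤ)) * L * 2 ^ ((1:ℤ) - (i:ℤ)) *
          u ^ (i - 1) / (G * A')) = 0 := by
  rw [← hGA, ← Finset.sum_add_distrib]
  exact Finset.sum_eq_zero fun i _ => by ring

lemma Hdisp_eq {a : ℝ} (ha : a ≠ 0) (c s L E I A A' G u x₀ : ℝ) (hGA : E * A = G * A')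
    (P : ℕ) :
    Hdisp c s L E I A A' G a u u x₀ P =
      c * s * L ^ 3 / (a * E * I) *
        (20 / 3 * ∑ i ∈ Finset.Icc 1 P, (1 - 2 * (binDigit i x₀ : ℝ)) * (a / 16) ^ i -
          4 * ((1 / 2) ^ P *
            ∑ i ∈ Finset.Icc 1 P, (1 - 2 * (binDigit i x₀ : ℝ)) * (a / 8) ^ i)) := by
  rw [Hdisp, add_assoc, axial_add_shear_eq_zero c s L E A A' G u x₀ hGA, add_zero,
    Finset.sum_congr rfl fun i hi => bending_term_eq ha c s L E I _ (Finset.mem_Icc.mp hi).1 P,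
    Finset.mul_sum, Finset.mul_sum, Finset.mul_sum, ← Finset.sum_sub_distrib, Finset.mul_sum]
  exact Finset.sum_congr rfl fun i _ => by ring

theorem horizontal_displacement_cancellation_general (c s L E I A A' G a u v : ℝ)
    (ha1 : 1 < a) (ha16 : a < 16) (hu1 : 1 < u)
    (huv : u = v) (hEA : E * A * u = G * A' * v)
    (x₀ : ℝ) :
    (∀ P : ℕ,
      (∑ i ∈ Finset.Icc 1 P,
          c * s * (2 * (binDigit i x₀ : ℝ) - 1) * 2 ^ (-(i:ℤ)) * L * 2 ^ ((1:ℤ) - (i:ℤ)) *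
            u ^ (i - 1) / (E * A)) +
      (∑ i ∈ Finset.Icc 1 P,
          c * s * (1 - 2 * (binDigit i x₀ : ℝ)) * 2 ^ (-(i:ℤ)) * L * 2 ^ ((1:ℤ) - (i:ℤ)) *
            v ^ (i - 1) / (G * A')) = 0) ∧
    Tendsto (fun P : ℕ => Hdisp c s L E I A A' G a u v x₀ P) atTop
      (nhds ((20 * c * s * L ^ 3 / (3 * E * I)) *
        (1 / (16 - a) - (2 / a) * Cinf (a / 16) x₀))) := by
  subst huv
  have hGA : E * A = G * A' := mul_right_cancel₀ (zero_lt_one.trans hu1).ne' hEA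
  refine ⟨axial_add_shear_eq_zero c s L E A A' G u x₀ hGA, ?_⟩
  have ha : 0 < a := zero_lt_one.trans ha1
  have h16 := tendsto_sum_one_sub_two_mul_binDigit_mul_pow (t := a / 16)
    (by rw [abs_of_pos (by positivity)]; linarith) x₀
  have h8 := tendsto_half_pow_mul_sum_pow
    (fun i hi => (abs_one_sub_two_mul_binDigit hi x₀).le) (b := a / 8)
    (by rw [abs_of_pos (by positivity)]; linarith)
  have hlim := ((h16.const_mul (20 / 3)).sub (h8.const_mul 4)).const_mul
    (c * s * L ^ 3 / (a * E * I))
  simp only [← Hdisp_eq ha.ne' c s L E I A A' G u x₀ hGA] at hlim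
  convert hlim using 2
  have h16a : 16 - a ≠ 0 := by linarith
  field_simp
  ring

/-- When `u = v` and `E·A·u = G·A*·v`, the axial and shear contributions to the horizontal
displacement cancel identically, and the horizontal displacements of the end nodes of the
infinite binary tree are given by an inverse β-Cantor function. -/
theorem horizontal_displacement_cancellation (c s L E I A A' G a u v : ℝ)
    (hc : 0 < c) (hs : 0 < s) (hL : 0 < L) (hE : 0 < E) (hI : 0 < I)
    (hA : 0 < A) (hA' : 0 < A') (hG : 0 < G)
    (ha1 : 1 < a) (ha16 : a < 16) (hu1 : 1 < u) (hv1 : 1 < v)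
    (huv : u = v) (hEA : E * A * u = G * A' * v)
    (x₀ : ℝ) (hx₀ : x₀ ∈ Set.Ico (0:ℝ) 1) :
    (∀ P : ℕ,
      (∑ i ∈ Finset.Icc 1 P,
          c * s * (2 * (binDigit i x₀ : ℝ) - 1) * 2 ^ (-(i:ℤ)) * L * 2 ^ ((1:ℤ) - (i:ℤ)) *
            u ^ (i - 1) / (E * A)) +
      (∑ i ∈ Finset.Icc 1 P,
          c * s * (1 - 2 * (binDigit i x₀ : ℝ)) * 2 ^ (-(i:ℤ)) * L * 2 ^ ((1:ℤ) - (i:ℤ)) *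
            v ^ (i - 1) / (G * A')) = 0) ∧
    Tendsto (fun P : ℕ => Hdisp c s L E I A A' G a u v x₀ P) atTop
      (nhds ((20 * c * s * L ^ 3 / (3 * E * I)) *
        (1 / (16 - a) - (2 / a) * Cinf (a / 16) x₀))) :=
  horizontal_displacement_cancellation_general c s L E I A A' G a u v ha1 ha16 hu1 huv hEA x₀
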